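/- Let q ∈ (1/2,1), K ≥ 1, 1 ≤ C ≤ K/2, λ ∈ (0,1]. If the majority-rule inflow accuracy function φ^λ has a fixed point x' ∈ [0,1] with λ'x'+(1-λ')q < 1/2 at some virality weight λ' ∈ [0, λ), then φ at virality weight λ has a fixed point x'' ∈ (0, 1/2) with λx''+(1-λ)q < 1/2. -/

import Mathlib

/-!
The map `x ↦ inflowMaj q K C l x` sees `(l, x)` only through the sampling accuracy
`l * x + (1 - l) * q`. Raising the virality weight from `lam'` to `lam`, the point `x` with the
same accuracy as the misleading fixed point `x'` lies strictly to its right (because `x' < q`)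
and still below `1/2`, and is mapped to `x' < x`. Since the map is positive at `0`, the
intermediate value theorem gives a fixed point in `(0, x)`, whose accuracy is below that of `x`.
-/

open Finset

noncomputable def binPMF (J k : ℕ) (p : ℝ) : ℝ :=
  (J.choose k : ℝ) * p ^ k * (1 - p) ^ (J - k)

/-- Majority-rule inflow accuracy with virality weight `l`, for general parity of `K`. -/
noncomputable def inflowMaj (q : ℝ) (K C : ℕ) (l x : ℝ) : ℝ :=
  (q + (C : ℝ) * ((∑ k ∈ Finset.Icc (K/2 + 1) K, binPMF K k (l * x + (1 - l) * q)) +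
    (if Even K then q * binPMF K (K/2) (l * x + (1 - l) * q) else 0))) / (1 + (C : ℝ))

theorem exists_mem_Ioo_apply_eq_self {f : ℝ → ℝ} {a b : ℝ} (hf : ContinuousOn f (Set.Icc a b))
    (hab : a ≤ b) (ha : a < f a) (hb : f b < b) : ∃ c ∈ Set.Ioo a b, f c = c := by
  obtain ⟨c, hc, hfc⟩ := intermediate_value_Ioo' hab (hf.sub continuousOn_id)
    (show (0 : ℝ) ∈ Set.Ioo (f b - b) (f a - a) from ⟨by linarith, by linarith⟩)
  exact ⟨c, hc, sub_eq_zero.mp hfc⟩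

lemma binPMF_nonneg (J k : ℕ) {p : ℝ} (h0 : 0 ≤ p) (h1 : p ≤ 1) : 0 ≤ binPMF J k p := by
  have : 0 ≤ 1 - p := sub_nonneg.mpr h1
  unfold binPMF
  positivity

lemma continuous_inflowMaj (q : ℝ) (K C : ℕ) (l : ℝ) : Continuous (inflowMaj q K C l) := by
  unfold inflowMaj binPMF
  split_ifs <;> fun_prop

lemma inflowMaj_eq_of_accuracy_eq {q : ℝ} (K C : ℕ) {l l' x x' : ℝ}
    (h : l * x + (1 - l) * q = l' * x' + (1 - l') * q) :
    inflowMaj q K C l x = inflowMaj q K C l' x' := by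
  unfold inflowMaj
  rw [h]

lemma inflowMaj_pos {q : ℝ} (K C : ℕ) {l x : ℝ} (hq : 0 < q)
    (h0 : 0 ≤ l * x + (1 - l) * q) (h1 : l * x + (1 - l) * q ≤ 1) :
    0 < inflowMaj q K C l x := by
  have hsum : 0 ≤ ∑ k ∈ Finset.Icc (K/2 + 1) K, binPMF K k (l * x + (1 - l) * q) :=
    Finset.sum_nonneg fun k _ => binPMF_nonneg K k h0 h1
  have htie : 0 ≤ (if Even K then q * binPMF K (K/2) (l * x + (1 - l) * q) else 0) := by
    split_ifs
    · exact mul_nonneg hq.le (binPMF_nonneg K _ h0 h1)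
    · exact le_rfl
  unfold inflowMaj
  positivity

theorem stmt18_general (q lam lam' x' : ℝ) (K C : ℕ)
    (hq : q ∈ Set.Ioo (1/2 : ℝ) 1) (hlam : lam ∈ Set.Ioc (0:ℝ) 1)
    (hlam' : lam' ∈ Set.Ico (0:ℝ) lam)
    (hx' : x' ∈ Set.Icc (0:ℝ) 1)
    (hmis : lam' * x' + (1 - lam') * q < 1/2)
    (hfix : inflowMaj q K C lam' x' = x') :
    ∃ x'' ∈ Set.Ioo (0:ℝ) (1/2),
      inflowMaj q K C lam x'' = x'' ∧ lam * x'' + (1 - lam) * q < 1/2 := by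
  obtain ⟨hq_half, hq_one⟩ := hq
  obtain ⟨hlam_pos, hlam_le⟩ := hlam
  obtain ⟨hlam'_nonneg, hlam'_lt⟩ := hlam'
  obtain ⟨x, hx_acc⟩ : ∃ x, lam * x + (1 - lam) * q = lam' * x' + (1 - lam') * q :=
    ⟨(lam' * x' + (1 - lam') * q - (1 - lam) * q) / lam, by field_simp; ring⟩
  have hx'_lt_q : x' < q := by nlinarith
  have hx'_lt_x : x' < x := by nlinarith [mul_pos (sub_pos.mpr hlam'_lt) (sub_pos.mpr hx'_lt_q)]
  have hx_lt_half : x < 1/2 := by nlinarith [mul_nonneg (sub_nonneg.mpr hlam_le) (sub_nonneg.mpr hq_half.le)]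
  have hφx : inflowMaj q K C lam x < x := by
    rwa [inflowMaj_eq_of_accuracy_eq K C hx_acc, hfix]
  have hφ0 : 0 < inflowMaj q K C lam 0 :=
    inflowMaj_pos K C (by linarith) (by nlinarith) (by nlinarith)
  obtain ⟨y, hy, hφy⟩ := exists_mem_Ioo_apply_eq_self (continuous_inflowMaj q K C lam).continuousOn
    (hx'.1.trans hx'_lt_x.le) hφ0 hφx
  refine ⟨y, ⟨hy.1, hy.2.trans hx_lt_half⟩, hφy, ?_⟩
  nlinarith [mul_lt_mul_of_pos_left hy.2 hlam_pos]

theorem stmt18 (q lam lam' x' : ℝ) (K C : ℕ)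
    (hq : q ∈ Set.Ioo (1/2 : ℝ) 1) (hlam : lam ∈ Set.Ioc (0:ℝ) 1)
    (hK : 1 ≤ K) (hC : 1 ≤ C) (hCK : 2 * C ≤ K)
    (hlam' : lam' ∈ Set.Ico (0:ℝ) lam)
    (hx' : x' ∈ Set.Icc (0:ℝ) 1)
    (hmis : lam' * x' + (1 - lam') * q < 1/2)
    (hfix : inflowMaj q K C lam' x' = x') :
    ∃ x'' ∈ Set.Ioo (0:ℝ) (1/2),
      inflowMaj q K C lam x'' = x'' ∧ lam * x'' + (1 - lam) * q < 1/2 :=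
  stmt18_general q lam lam' x' K C hq hlam hlam' hx' hmis hfix
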